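/- arXiv:2411.14987 — 6 statements merged into one kernel-verified Lean document; each statement's English description precedes it below -/
import Mathlib

section
/- For a family X = (x_i)_{i∈I} of points in an LCA group G, the following are equivalent: (a) there exists a relatively compact zero neighborhood U and a finite B with #{j : (x_i+U)∩(x_j+U) ≠ ∅} ≤ B for all i; (b) for every relatively compact zero neighborhood V there exists finite B_V with #{j : (x_i+V)∩(x_j+V) ≠ ∅} ≤ B_V for all i; (c) the weighted Dirac comb δ_X is translation bounded, i.e., sup_{x∈G} #{i : x_i ∈ x+K} < ∞ for every compact K ⊆ G. -/
open Pointwise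

/-!
If the translates `x i + U` overlap boundedly, then a translate of a compact `K` is covered by
finitely many translates `y + U`, and each of these contains at most `B` points of `X` since any
two of them have overlapping `U`-translates; so `δ_X` is translation bounded. Conversely,
`(x i + V) ∩ (x j + V) ≠ ∅` means `x j ∈ x i + (V - V)`, and `closure V - closure V` is compact.
-/

section OverlapCount

variable {G I : Type*} [AddCommGroup G]

lemma vadd_set_inter_vadd_set_nonempty_iff {a b : G} {V : Set G} :
    ((a +ᵥ V) ∩ (b +ᵥ V)).Nonempty ↔ b ∈ a +ᵥ (V - V) := by
  constructor
  · rintro ⟨y, ⟨u, hu, rfl⟩, ⟨v, hv, hy⟩⟩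
    exact ⟨u - v, Set.sub_mem_sub hu hv, by
      simp only [vadd_eq_add] at hy ⊢; rw [← add_sub_assoc, ← hy]; abel⟩
  · rintro ⟨_, ⟨u, hu, v, hv, rfl⟩, rfl⟩
    exact ⟨a + u, ⟨u, hu, rfl⟩, ⟨v, hv, by simp only [vadd_eq_add]; abel⟩⟩

lemma vadd_set_inter_vadd_set_nonempty_of_mem {a b y : G} {U : Set G}
    (ha : a ∈ y +ᵥ U) (hb : b ∈ y +ᵥ U) : ((a +ᵥ U) ∩ (b +ᵥ U)).Nonempty := by
  obtain ⟨u, hu, rfl⟩ := ha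
  obtain ⟨v, hv, rfl⟩ := hb
  exact vadd_set_inter_vadd_set_nonempty_iff.2
    ⟨v - u, Set.sub_mem_sub hv hu, by simp only [vadd_eq_add]; abel⟩

variable (x : I → G) {U : Set G} {B : ℕ}

lemma encard_setOf_mem_vadd_le_of_overlap
    (hB : ∀ i, {j | ((x i +ᵥ U) ∩ (x j +ᵥ U)).Nonempty}.encard ≤ B) (y : G) :
    {j | x j ∈ y +ᵥ U}.encard ≤ B := by
  obtain hempty | ⟨i, hi⟩ := Set.eq_empty_or_nonempty {j | x j ∈ y +ᵥ U}
  · simp [hempty]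
  · refine (Set.encard_mono fun j hj => ?_).trans (hB i)
    exact vadd_set_inter_vadd_set_nonempty_of_mem hi hj

lemma encard_setOf_mem_vadd_le_of_subset_biUnion {K : Set G} {T : Finset G}
    (hKT : K ⊆ ⋃ t ∈ T, t +ᵥ U) (hB : ∀ y : G, {j | x j ∈ y +ᵥ U}.encard ≤ B) (g : G) :
    {i | x i ∈ g +ᵥ K}.encard ≤ T.card * B := by
  have hcover : {i | x i ∈ g +ᵥ K} ⊆ ⋃ t ∈ T, {i | x i ∈ (g + t : G) +ᵥ U} := by
    rintro i ⟨k, hk, hik⟩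
    obtain ⟨t, ht, u, hu, rfl⟩ := Set.mem_iUnion₂.1 (hKT hk)
    exact Set.mem_iUnion₂.2 ⟨t, ht, u, hu, by rw [← hik]; simp only [vadd_eq_add]; abel⟩
  calc {i | x i ∈ g +ᵥ K}.encard
      ≤ ∑ t ∈ T, {i | x i ∈ (g + t : G) +ᵥ U}.encard :=
        (Set.encard_mono hcover).trans (T.set_encard_biUnion_le _)
    _ ≤ T.card * B := by
        simpa using Finset.sum_le_card_nsmul T _ (B : ℕ∞) fun t _ => hB (g + t)

end OverlapCount

theorem stmt1_general {G I : Type*} [AddCommGroup G] [TopologicalSpace G] [IsTopologicalAddGroup G]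
    [LocallyCompactSpace G] (x : I → G) :
    List.TFAE
      [ ∃ U ∈ nhds (0 : G), IsCompact (closure U) ∧ ∃ B : ℕ, ∀ i : I,
          ({j : I | (((x i) +ᵥ U) ∩ ((x j) +ᵥ U)).Nonempty} : Set I).encard ≤ B,
        ∀ V ∈ nhds (0 : G), IsCompact (closure V) → ∃ B : ℕ, ∀ i : I,
          ({j : I | (((x i) +ᵥ V) ∩ ((x j) +ᵥ V)).Nonempty} : Set I).encard ≤ B,
        ∀ K : Set G, IsCompact K → ∃ C : ℕ, ∀ g : G,
          ({i : I | x i ∈ g +ᵥ K} : Set I).encard ≤ C ] := by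
  tfae_have 1 → 3
  | ⟨U, hU, _, B, hB⟩, K, hK => by
    obtain ⟨T, -, hKT⟩ := hK.elim_nhds_subcover (· +ᵥ U) fun t _ => vadd_mem_nhds_self.2 hU
    exact ⟨T.card * B, encard_setOf_mem_vadd_le_of_subset_biUnion x hKT
      (encard_setOf_mem_vadd_le_of_overlap x hB)⟩
  tfae_have 3 → 2
  | h3, V, _, hV => by
    have hVV : IsCompact (closure V - closure V) := sub_eq_add_neg (closure V) _ ▸ hV.add hV.neg
    obtain ⟨C, hC⟩ := h3 _ hVV
    refine ⟨C, fun i => (Set.encard_mono fun j hj => ?_).trans (hC (x i))⟩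
    exact Set.vadd_set_mono (Set.sub_subset_sub subset_closure subset_closure)
      (vadd_set_inter_vadd_set_nonempty_iff.1 hj)
  tfae_have 2 → 1
  | h2 => by
    obtain ⟨K, hK, hK0⟩ := exists_compact_mem_nhds (0 : G)
    exact ⟨K, hK0, hK.closure, h2 K hK0 hK.closure⟩
  tfae_finish

/-- For a point family `X = (x i)` in an LCA group `G`, the following are
equivalent: (a) some relatively compact zero neighborhood `U` has uniformly bounded overlap
counts; (b) every relatively compact zero neighborhood has uniformly bounded overlap counts;
(c) the Dirac comb `δ_X` is translation bounded, i.e. for every compact `K`,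
`sup_{g∈G} #{i : x i ∈ g + K} < ∞`. -/
theorem stmt1 {G I : Type*} [AddCommGroup G] [TopologicalSpace G] [IsTopologicalAddGroup G]
    [LocallyCompactSpace G] [T2Space G] (x : I → G) :
    List.TFAE
      [ ∃ U ∈ nhds (0 : G), IsCompact (closure U) ∧ ∃ B : ℕ, ∀ i : I,
          ({j : I | (((x i) +ᵥ U) ∩ ((x j) +ᵥ U)).Nonempty} : Set I).encard ≤ B,
        ∀ V ∈ nhds (0 : G), IsCompact (closure V) → ∃ B : ℕ, ∀ i : I,
          ({j : I | (((x i) +ᵥ V) ∩ ((x j) +ᵥ V)).Nonempty} : Set I).encard ≤ B,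
        ∀ K : Set G, IsCompact K → ∃ C : ℕ, ∀ g : G,
          ({i : I | x i ∈ g +ᵥ K} : Set I).encard ≤ C ] :=
  stmt1_general x
end

section
/- Any two BUPUs Φ (of size U, family X, norm M_Φ) and Ψ (of size V, family Y, norm M_Ψ) on an LCA group G induce equivalent norms on the Wiener algebra: ‖f‖_Ψ ≤ ‖δ_Y‖_{U−V} · M_Ψ · ‖f‖_Φ for all f, where ‖f‖_Φ = ∑_i ‖f φ_i‖_∞ and ‖δ_Y‖_{U−V} = sup_{x∈G} #{j : y_j ∈ x + (U−V)}. -/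
open Pointwise MeasureTheory Filter Topology ENNReal

/-- A bounded uniform partition of unity (BUPU) on `G`: a family `φ i` of continuous
functions with `supp φ_i ⊆ x_i + U` for a relatively compact zero neighborhood `U`,
uniformly bounded overlap constant `B`, summing to `1`, and `‖φ_i‖_∞ ≤ M`. -/
structure IsBUPU {G I : Type*} [AddCommGroup G] [TopologicalSpace G]
    (φ : I → G → ℝ) (x : I → G) (U : Set G) (M : NNReal) (B : ℕ) : Prop where
  mem_nhds : U ∈ nhds (0 : G)
  relCompact : IsCompact (closure U)
  continuous : ∀ i, Continuous (φ i)
  support_subset : ∀ i, tsupport (φ i) ⊆ (x i) +ᵥ U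
  overlap : ∀ i, ({j : I | (((x i) +ᵥ U) ∩ ((x j) +ᵥ U)).Nonempty} : Set I).encard ≤ B
  hasSum_one : ∀ g : G, HasSum (fun i => φ i g) 1
  norm_le : ∀ i g, ‖φ i g‖₊ ≤ M

/-- The Wiener-algebra norm `‖f‖_Φ = ∑_i ‖f · φ_i‖_∞` associated to a BUPU `Φ = (φ i)`,
valued in `ℝ≥0∞`. -/
noncomputable def WNorm {G I : Type*} (φ : I → G → ℝ) (f : G → ℂ) : ℝ≥0∞ :=
  ∑' i : I, ⨆ g : G, (‖f g * (φ i g : ℂ)‖₊ : ℝ≥0∞)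

/-! Compare the two decompositions `f = ∑_i f φ_i` and
`f = ∑_j f ψ_j`. Where `ψ_j(g) ≠ 0` we have `g ∈ y_j + V`, and `φ_i(g) ≠ 0` forces
`g ∈ x_i + U`; so only the pieces with `y_j ∈ x_i + (U - V)` contribute, and
`‖f ψ_j‖_∞ ≤ M_Ψ ∑_{i : y_j ∈ x_i + (U - V)} ‖f φ_i‖_∞`. Summing over `j` and exchanging the
(nonnegative) sums, each `‖f φ_i‖_∞` is counted `#{j : y_j ∈ x_i + (U - V)} ≤ ‖δ_Y‖_{U-V}`
times. -/

lemma mem_vadd_sub_of_mem_vadd {G : Type*} [AddCommGroup G] {a b g : G} {U V : Set G}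
    (hU : g ∈ a +ᵥ U) (hV : g ∈ b +ᵥ V) : b ∈ a +ᵥ (U - V) := by
  obtain ⟨u, hu, rfl⟩ := hU
  obtain ⟨v, hv, hbv⟩ := hV
  refine ⟨u - v, Set.sub_mem_sub hu hv, ?_⟩
  simp only [vadd_eq_add] at hbv ⊢
  rw [add_sub, ← hbv, add_sub_cancel_right]

lemma enorm_le_tsum_enorm_mul_of_hasSum_one {ι : Type*} {a : ι → ℝ} (ha : HasSum a 1) (z : ℂ) :
    ‖z‖ₑ ≤ ∑' i, ‖z * (a i : ℂ)‖ₑ := by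
  have hz : HasSum (fun i => z * (a i : ℂ)) z := by
    simpa using (Complex.ofRealCLM.hasSum ha).mul_left z
  nth_rw 1 [← hz.tsum_eq]
  exact enorm_tsum_le_tsum_enorm

lemma ENNReal.tsum_ite_const {ι : Type*} (p : ι → Prop) [DecidablePred p] (c : ℝ≥0∞) :
    ∑' i, (if p i then c else 0) = {i | p i}.encard * c := by
  rw [← ENNReal.tsum_set_const, tsum_subtype {i | p i} fun _ => c]
  simp [Set.indicator_apply]

namespace IsBUPU

variable {G I J : Type*} [AddCommGroup G] [TopologicalSpace G]
  {φ : I → G → ℝ} {x : I → G} {U : Set G} {MΦ : NNReal} {BΦ : ℕ}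
  {ψ : J → G → ℝ} {y : J → G} {V : Set G} {MΨ : NNReal} {BΨ : ℕ}

lemma enorm_mul_le_ite (hΦ : IsBUPU φ x U MΦ BΦ) (f : G → ℂ) (i : I) {b g : G}
    (hg : g ∈ b +ᵥ V) [Decidable (b ∈ x i +ᵥ (U - V))] :
    ‖f g * (φ i g : ℂ)‖ₑ ≤
      if b ∈ x i +ᵥ (U - V) then ⨆ g', ‖f g' * (φ i g' : ℂ)‖ₑ else 0 := by
  by_cases hφ : φ i g = 0
  · simp [hφ]
  have hb : b ∈ x i +ᵥ (U - V) :=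
    mem_vadd_sub_of_mem_vadd (hΦ.support_subset i (subset_tsupport _ hφ)) hg
  rw [if_pos hb]
  exact le_iSup (fun g' => ‖f g' * (φ i g' : ℂ)‖ₑ) g

lemma iSup_enorm_mul_le (hΨ : IsBUPU ψ y V MΨ BΨ) (hΦ : IsBUPU φ x U MΦ BΦ) (f : G → ℂ) (j : J)
    [∀ i, Decidable (y j ∈ x i +ᵥ (U - V))] :
    ⨆ g, ‖f g * (ψ j g : ℂ)‖ₑ ≤
      MΨ * ∑' i, if y j ∈ x i +ᵥ (U - V) then ⨆ g, ‖f g * (φ i g : ℂ)‖ₑ else 0 := by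
  refine iSup_le fun g => ?_
  by_cases hψ : ψ j g = 0
  · simp [hψ]
  have hg : g ∈ y j +ᵥ V := hΨ.support_subset j (subset_tsupport _ hψ)
  calc ‖f g * (ψ j g : ℂ)‖ₑ ≤ MΨ * ‖f g‖ₑ := by
        rw [enorm_mul, mul_comm]
        gcongr
        simpa [enorm_eq_nnnorm] using hΨ.norm_le j g
    _ ≤ MΨ * ∑' i, ‖f g * (φ i g : ℂ)‖ₑ := by
        gcongr
        exact enorm_le_tsum_enorm_mul_of_hasSum_one (hΦ.hasSum_one g) (f g)
    _ ≤ _ := by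
        gcongr with i
        exact hΦ.enorm_mul_le_ite f i hg

end IsBUPU

theorem stmt7_general {G I J : Type*} [AddCommGroup G] [TopologicalSpace G]
    {φ : I → G → ℝ} {x : I → G} {U : Set G} {MΦ : NNReal} {BΦ : ℕ}
    {ψ : J → G → ℝ} {y : J → G} {V : Set G} {MΨ : NNReal} {BΨ : ℕ}
    (hΦ : IsBUPU φ x U MΦ BΦ) (hΨ : IsBUPU ψ y V MΨ BΨ)
    (f : G → ℂ) :
    WNorm ψ f ≤
      (⨆ g : G, (({j : J | y j ∈ g +ᵥ (U - V)} : Set J).encard : ℝ≥0∞)) * (MΨ : ℝ≥0∞) *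
        WNorm φ f := by
  classical
  set C := ⨆ g : G, (({j : J | y j ∈ g +ᵥ (U - V)} : Set J).encard : ℝ≥0∞)
  set T : I → ℝ≥0∞ := fun i => ⨆ g, ‖f g * (φ i g : ℂ)‖ₑ
  calc WNorm ψ f
      ≤ ∑' j, MΨ * ∑' i, (if y j ∈ x i +ᵥ (U - V) then T i else 0) :=
        ENNReal.tsum_le_tsum fun j => hΨ.iSup_enorm_mul_le hΦ f j
    _ = MΨ * ∑' i, ∑' j, (if y j ∈ x i +ᵥ (U - V) then T i else 0) := by
        rw [ENNReal.tsum_mul_left, ENNReal.tsum_comm]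
    _ = MΨ * ∑' i, ({j | y j ∈ x i +ᵥ (U - V)} : Set J).encard * T i := by
        simp only [ENNReal.tsum_ite_const]
    _ ≤ MΨ * ∑' i, C * T i := by
        gcongr with i
        exact le_iSup (fun g : G => (({j : J | y j ∈ g +ᵥ (U - V)} : Set J).encard : ℝ≥0∞)) (x i)
    _ = C * MΨ * WNorm φ f := by
        rw [ENNReal.tsum_mul_left, mul_left_comm, mul_assoc]
        rfl

/-- Any two BUPUs `Φ` (size `U`, family `X`, norm `M_Φ`) and `Ψ` (size `V`,
family `Y`, norm `M_Ψ`) induce equivalent Wiener norms: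
`‖f‖_Ψ ≤ ‖δ_Y‖_{U−V} · M_Ψ · ‖f‖_Φ`, where
`‖δ_Y‖_{U−V} = sup_{g∈G} #{j : y j ∈ g + (U−V)}`. -/
theorem stmt7 {G I J : Type*} [AddCommGroup G] [TopologicalSpace G] [IsTopologicalAddGroup G]
    [LocallyCompactSpace G] [T2Space G]
    {φ : I → G → ℝ} {x : I → G} {U : Set G} {MΦ : NNReal} {BΦ : ℕ}
    {ψ : J → G → ℝ} {y : J → G} {V : Set G} {MΨ : NNReal} {BΨ : ℕ}
    (hΦ : IsBUPU φ x U MΦ BΦ) (hΨ : IsBUPU ψ y V MΨ BΨ)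
    (f : G → ℂ) (hfc : Continuous f) (hf0 : Tendsto f (cocompact G) (nhds 0)) :
    WNorm ψ f ≤
      (⨆ g : G, (({j : J | y j ∈ g +ᵥ (U - V)} : Set J).encard : ℝ≥0∞)) * (MΨ : ℝ≥0∞) *
        WNorm φ f :=
  stmt7_general hΦ hΨ f
end

section
/- Let μ be a translation bounded measure on an LCA group G and f ∈ W(G). Then f is |μ|-integrable and ∫|f| d|μ| ≤ ‖μ‖_U · ‖f‖_Φ, where Φ is a BUPU of size U and ‖μ‖_U = sup_{x∈G} |μ|(x+U). In particular, μ extends to a bounded linear functional on (W(G), ‖·‖_Φ). -/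
open Pointwise MeasureTheory Filter Topology ENNReal

/-! Writing `f = ∑ᵢ f φᵢ` gives `|f| ≤ ∑ᵢ |f φᵢ|` pointwise, and each `f φᵢ` is bounded by
`‖f φᵢ‖_∞` and supported in `xᵢ + U`, a set of `ν`-measure at most `‖ν‖_U`. Integrating termwise
(only countably many `‖f φᵢ‖_∞` are nonzero since their sum is finite) yields
`∫ |f| dν ≤ ‖ν‖_U · ∑ᵢ ‖f φᵢ‖_∞`. -/

section Lintegral

variable {α ι : Type*} [MeasurableSpace α] {μ : Measure α}

theorem MeasureTheory.lintegral_le_iSup_mul_measure_of_support_subset {f : α → ℝ≥0∞}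
    {s : Set α} (hfs : f.support ⊆ s) : ∫⁻ a, f a ∂μ ≤ (⨆ a, f a) * μ s := by
  rw [← setLIntegral_eq_of_support_subset hfs, ← Measure.restrict_apply_univ]
  exact lintegral_le_iSup_mul f

theorem MeasureTheory.lintegral_tsum_of_countable_of_eq_zero {f : ι → α → ℝ≥0∞}
    {s : Set ι} (hs : s.Countable) (hfs : ∀ i ∉ s, f i = 0) (hf : ∀ i, AEMeasurable (f i) μ) :
    ∫⁻ a, ∑' i, f i a ∂μ = ∑' i, ∫⁻ a, f i a ∂μ := by
  have : Countable s := hs.to_subtype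
  have hsupp (a : α) : (fun i => f i a).support ⊆ s := fun i hi => by
    by_contra his
    simp [hfs i his] at hi
  have hsupp_lintegral : (fun i => ∫⁻ a, f i a ∂μ).support ⊆ s := fun i hi => by
    by_contra his
    simp [hfs i his] at hi
  calc ∫⁻ a, ∑' i, f i a ∂μ = ∫⁻ a, ∑' i : s, f i a ∂μ := by
        simp_rw [tsum_subtype_eq_of_support_subset (hsupp _)]
    _ = ∑' i : s, ∫⁻ a, f i a ∂μ := lintegral_tsum fun i => hf i
    _ = ∑' i, ∫⁻ a, f i a ∂μ := tsum_subtype_eq_of_support_subset hsupp_lintegral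

end Lintegral

namespace IsBUPU

variable {G I : Type*} [AddCommGroup G] [TopologicalSpace G]
  {φ : I → G → ℝ} {x : I → G} {U : Set G} {M : NNReal} {B : ℕ}

theorem enorm_le_tsum_enorm_mul (hΦ : IsBUPU φ x U M B) (f : G → ℂ) (g : G) :
    ‖f g‖ₑ ≤ ∑' i, ‖f g * (φ i g : ℂ)‖ₑ := by
  have hsum : HasSum (fun i => f g * (φ i g : ℂ)) (f g) := by
    simpa using (Complex.hasSum_ofReal.mpr (hΦ.hasSum_one g)).mul_left (f g)
  calc ‖f g‖ₑ = ‖∑' i, f g * (φ i g : ℂ)‖ₑ := by rw [hsum.tsum_eq]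
    _ ≤ _ := enorm_tsum_le_tsum_enorm

theorem lintegral_enorm_mul_le (hΦ : IsBUPU φ x U M B) [MeasurableSpace G] (ν : Measure G)
    (f : G → ℂ) (i : I) :
    ∫⁻ g, ‖f g * (φ i g : ℂ)‖ₑ ∂ν ≤
      (⨆ g, ‖f g * (φ i g : ℂ)‖ₑ) * ⨆ g : G, ν (g +ᵥ U) := by
  have hsupp : (fun g => ‖f g * (φ i g : ℂ)‖ₑ).support ⊆ x i +ᵥ U := fun g hg => by
    refine hΦ.support_subset i (subset_tsupport _ fun h0 => hg ?_)
    simp [h0]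
  calc ∫⁻ g, ‖f g * (φ i g : ℂ)‖ₑ ∂ν ≤ (⨆ g, ‖f g * (φ i g : ℂ)‖ₑ) * ν (x i +ᵥ U) :=
        lintegral_le_iSup_mul_measure_of_support_subset hsupp
    _ ≤ _ := by gcongr; exact le_iSup (fun g => ν (g +ᵥ U)) (x i)

theorem lintegral_enorm_le_iSup_measure_mul_WNorm (hΦ : IsBUPU φ x U M B) [MeasurableSpace G]
    [OpensMeasurableSpace G] (ν : Measure G) {f : G → ℂ} (hf : Continuous f)
    (hfW : WNorm φ f ≠ ⊤) :
    ∫⁻ g, ‖f g‖ₑ ∂ν ≤ (⨆ g : G, ν (g +ᵥ U)) * WNorm φ f := by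
  set C : I → ℝ≥0∞ := fun i => ⨆ g, ‖f g * (φ i g : ℂ)‖ₑ
  have hterm_eq_zero (i : I) (hi : i ∉ C.support) : (fun g => ‖f g * (φ i g : ℂ)‖ₑ) = 0 := by
    funext g
    exact le_antisymm ((le_iSup (fun g => ‖f g * (φ i g : ℂ)‖ₑ) g).trans_eq
      (Function.notMem_support.mp hi)) bot_le
  have hmeas (i : I) : AEMeasurable (fun g => ‖f g * (φ i g : ℂ)‖ₑ) ν :=
    (hf.mul (Complex.continuous_ofReal.comp (hΦ.continuous i))).measurable.enorm.aemeasurable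
  calc ∫⁻ g, ‖f g‖ₑ ∂ν ≤ ∫⁻ g, ∑' i, ‖f g * (φ i g : ℂ)‖ₑ ∂ν :=
        lintegral_mono (hΦ.enorm_le_tsum_enorm_mul f)
    _ = ∑' i, ∫⁻ g, ‖f g * (φ i g : ℂ)‖ₑ ∂ν :=
        lintegral_tsum_of_countable_of_eq_zero (Summable.countable_support_ennreal hfW)
          hterm_eq_zero hmeas
    _ ≤ ∑' i, C i * ⨆ g : G, ν (g +ᵥ U) :=
        ENNReal.tsum_le_tsum fun i => hΦ.lintegral_enorm_mul_le ν f i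
    _ = (⨆ g : G, ν (g +ᵥ U)) * WNorm φ f := by
        rw [ENNReal.tsum_mul_right, mul_comm]
        rfl

end IsBUPU

theorem stmt9_general {G I : Type*} [AddCommGroup G] [TopologicalSpace G]
    [MeasurableSpace G] [BorelSpace G]
    (ν : Measure G)
    (hν : ∀ K : Set G, IsCompact K → (⨆ g : G, ν (g +ᵥ K)) < ⊤)
    {φ : I → G → ℝ} {x : I → G} {U : Set G} {M : NNReal} {B : ℕ}
    (hΦ : IsBUPU φ x U M B)
    (f : G → ℂ) (hfc : Continuous f)
    (hfW : WNorm φ f < ⊤) :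
    Integrable f ν ∧
      (∫⁻ g, (‖f g‖₊ : ℝ≥0∞) ∂ν) ≤ (⨆ g : G, ν (g +ᵥ U)) * WNorm φ f := by
  have hbound := hΦ.lintegral_enorm_le_iSup_measure_mul_WNorm ν hfc hfW.ne
  have hU : (⨆ g : G, ν (g +ᵥ U)) < ⊤ :=
    (iSup_mono fun g => measure_mono (Set.vadd_set_mono subset_closure)).trans_lt
      (hν _ hΦ.relCompact)
  exact ⟨⟨hfc.aestronglyMeasurable, hbound.trans_lt (ENNReal.mul_lt_top hU hfW)⟩, hbound⟩

/-- Let `μ` be a translation bounded measure on an LCA group `G` (here `ν`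
plays the role of the total variation `|μ|`) and `f ∈ W(G)`.  Then `f` is `|μ|`-integrable
with `∫ |f| d|μ| ≤ ‖μ‖_U · ‖f‖_Φ`, where `Φ` is a BUPU of size `U` and
`‖μ‖_U = sup_{g∈G} |μ|(g+U)`.  In particular `μ` is a bounded linear functional on
`(W(G), ‖·‖_Φ)`. -/
theorem stmt9 {G I : Type*} [AddCommGroup G] [TopologicalSpace G] [IsTopologicalAddGroup G]
    [LocallyCompactSpace G] [T2Space G] [MeasurableSpace G] [BorelSpace G]
    (ν : Measure G)
    (hν : ∀ K : Set G, IsCompact K → (⨆ g : G, ν (g +ᵥ K)) < ⊤)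
    {φ : I → G → ℝ} {x : I → G} {U : Set G} {M : NNReal} {B : ℕ}
    (hΦ : IsBUPU φ x U M B)
    (f : G → ℂ) (hfc : Continuous f) (hf0 : Tendsto f (cocompact G) (nhds 0))
    (hfW : WNorm φ f < ⊤) :
    Integrable f ν ∧
      (∫⁻ g, (‖f g‖₊ : ℝ≥0∞) ∂ν) ≤ (⨆ g : G, ν (g +ᵥ U)) * WNorm φ f :=
  stmt9_general ν hν hΦ f hfc hfW
end

section
/- For the Wiener algebra norm ‖f‖_Φ = ∑_i ‖f φ_i‖_∞ associated to a BUPU Φ of size U and norm M with point family X, the norm ‖f‖_W := sup_{x∈G} ‖T_x f‖_Φ is finite for every f ∈ W(G), satisfies ‖f‖_Φ ≤ ‖f‖_W ≤ ‖δ_X‖_{U−U}·M·‖f‖_Φ, and is translation invariant. -/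
/-
Decompose `f(· - a) φ_i = ∑_j f(· - a) φ_i φ_j(· - a)`. The `j`-th term vanishes unless the
supports `x_i + U` and `x_j + a + U` meet, i.e. unless `x_i ∈ x_j + a + (U - U)`, and it is bounded
by `M ‖f φ_j‖_∞`. Exchanging the sums over `i` and `j`, each `‖f φ_j‖_∞` is counted at most
`‖δ_X‖_{U-U}` times. This constant is finite because the compact set `closure U - closure U` is
covered by finitely many translates `p + U`, each containing at most `B` centers.
-/

open Pointwise MeasureTheory Filter Topology ENNReal

/-- The paper's `‖δ_X‖_V`. -/
noncomputable def maxCenters {G I : Type*} [AddCommGroup G] (x : I → G) (V : Set G) : ℝ≥0∞ :=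
  ⨆ g : G, (({i : I | x i ∈ g +ᵥ V} : Set I).encard : ℝ≥0∞)

lemma ENNReal.tsum_indicator_const {I : Type*} (s : Set I) (c : ℝ≥0∞) :
    ∑' i, s.indicator (fun _ => c) i = s.encard * c := by
  rw [← tsum_subtype, ENNReal.tsum_set_const]

namespace IsBUPU

variable {G I : Type*} [AddCommGroup G] [TopologicalSpace G]
  {φ : I → G → ℝ} {x : I → G} {U : Set G} {M : NNReal} {B : ℕ}

lemma center_mem_of_ne_zero (hΦ : IsBUPU φ x U M B) {i j : I} {g a : G}
    (hi : φ i g ≠ 0) (hj : φ j (g - a) ≠ 0) : x i ∈ (x j + a) +ᵥ (U - U) := by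
  obtain ⟨u, hu, hgu⟩ := hΦ.support_subset i (subset_tsupport _ hi)
  obtain ⟨v, hv, hgv⟩ := hΦ.support_subset j (subset_tsupport _ hj)
  refine ⟨v - u, Set.sub_mem_sub hv hu, ?_⟩
  simp only [vadd_eq_add] at hgu hgv ⊢
  calc x j + a + (v - u) = (x j + v) + a - u := by abel
    _ = x i := by rw [hgv, ← hgu]; abel

lemma enorm_translate_mul_le (hΦ : IsBUPU φ x U M B) (f : G → ℂ) (a g : G) (i : I) :
    (‖f (g - a) * (φ i g : ℂ)‖₊ : ℝ≥0∞) ≤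
      ∑' j, {i | x i ∈ (x j + a) +ᵥ (U - U)}.indicator
        (fun _ => (M : ℝ≥0∞) * ⨆ h, (‖f h * (φ j h : ℂ)‖₊ : ℝ≥0∞)) i := by
  have hsum : HasSum (fun j => f (g - a) * (φ i g : ℂ) * (φ j (g - a) : ℂ))
      (f (g - a) * (φ i g : ℂ)) := by
    simpa using (Complex.hasSum_ofReal.mpr (hΦ.hasSum_one (g - a))).mul_left
      (f (g - a) * (φ i g : ℂ))
  rw [← hsum.tsum_eq, ← enorm_eq_nnnorm]
  refine enorm_tsum_le_tsum_enorm.trans (ENNReal.tsum_le_tsum fun j => ?_)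
  by_cases hmem : x i ∈ (x j + a) +ᵥ (U - U)
  · rw [Set.indicator_of_mem (s := {i | x i ∈ (x j + a) +ᵥ (U - U)}) hmem]
    calc ‖f (g - a) * (φ i g : ℂ) * (φ j (g - a) : ℂ)‖ₑ
        = ‖(φ i g : ℂ)‖ₑ * ‖f (g - a) * (φ j (g - a) : ℂ)‖ₑ := by
          rw [mul_right_comm, mul_comm, enorm_mul]
      _ ≤ (M : ℝ≥0∞) * ⨆ h, (‖f h * (φ j h : ℂ)‖₊ : ℝ≥0∞) := by
          gcongr
          · simpa [enorm_eq_nnnorm] using hΦ.norm_le i g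
          · exact le_iSup (fun h => (‖f h * (φ j h : ℂ)‖₊ : ℝ≥0∞)) (g - a)
  · rw [Set.indicator_of_notMem (s := {i | x i ∈ (x j + a) +ᵥ (U - U)}) hmem]
    have hzero : φ i g = 0 ∨ φ j (g - a) = 0 := by
      by_contra! h
      exact hmem (hΦ.center_mem_of_ne_zero h.1 h.2)
    rcases hzero with h | h <;> simp [h]

lemma wnorm_translate_le (hΦ : IsBUPU φ x U M B) (f : G → ℂ) (a : G) :
    WNorm φ (fun t => f (t - a)) ≤ maxCenters x (U - U) * M * WNorm φ f := by
  set N : I → ℝ≥0∞ := fun j => ⨆ h, (‖f h * (φ j h : ℂ)‖₊ : ℝ≥0∞)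
  calc WNorm φ (fun t => f (t - a))
      ≤ ∑' i, ∑' j, {i | x i ∈ (x j + a) +ᵥ (U - U)}.indicator (fun _ => M * N j) i :=
        ENNReal.tsum_le_tsum fun i => iSup_le fun g => hΦ.enorm_translate_mul_le f a g i
    _ = ∑' j, ({i | x i ∈ (x j + a) +ᵥ (U - U)}.encard : ℝ≥0∞) * (M * N j) := by
        rw [ENNReal.tsum_comm]
        simp only [ENNReal.tsum_indicator_const]
    _ ≤ ∑' j, maxCenters x (U - U) * M * N j := by
        refine ENNReal.tsum_le_tsum fun j => ?_
        rw [mul_assoc]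
        gcongr
        exact le_iSup (fun g => (({i : I | x i ∈ g +ᵥ (U - U)} : Set I).encard : ℝ≥0∞)) _
    _ = maxCenters x (U - U) * M * WNorm φ f := ENNReal.tsum_mul_left

lemma encard_centers_mem_vadd_le (hΦ : IsBUPU φ x U M B) (z : G) :
    {i | x i ∈ z +ᵥ U}.encard ≤ B := by
  rcases Set.eq_empty_or_nonempty {i | x i ∈ z +ᵥ U} with hempty | ⟨i₀, u₀, hu₀, hi₀⟩
  · simp [hempty]
  refine (Set.encard_mono ?_).trans (hΦ.overlap i₀)
  rintro j ⟨u, hu, hj⟩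
  refine ⟨x i₀ + u, ⟨u, hu, rfl⟩, u₀, hu₀, ?_⟩
  simp only [vadd_eq_add] at hi₀ hj ⊢
  rw [← hi₀, ← hj]
  abel

lemma encard_centers_le_of_subset_biUnion (hΦ : IsBUPU φ x U M B) {V : Set G} {t : Finset G}
    (hV : V ⊆ ⋃ p ∈ t, p +ᵥ U) (g : G) :
    {i | x i ∈ g +ᵥ V}.encard ≤ t.card * B := by
  have hsub : {i | x i ∈ g +ᵥ V} ⊆ ⋃ p ∈ t, {i | x i ∈ (g + p) +ᵥ U} := by
    rintro i ⟨w, hw, hwi⟩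
    obtain ⟨p, hp, u, hu, rfl⟩ := Set.mem_iUnion₂.mp (hV hw)
    exact Set.mem_iUnion₂.mpr ⟨p, hp, u, hu, by simp only [vadd_eq_add] at hwi ⊢; rw [← hwi]; abel⟩
  calc {i | x i ∈ g +ᵥ V}.encard
      ≤ ∑ p ∈ t, {i | x i ∈ (g + p) +ᵥ U}.encard :=
        (Set.encard_mono hsub).trans (t.set_encard_biUnion_le _)
    _ ≤ t.card * B := by
        simpa using t.sum_le_card_nsmul _ _ fun p _ => hΦ.encard_centers_mem_vadd_le (g + p)

lemma exists_finset_sub_subset_biUnion [IsTopologicalAddGroup G] (hΦ : IsBUPU φ x U M B) :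
    ∃ t : Finset G, U - U ⊆ ⋃ p ∈ t, p +ᵥ U := by
  have hK : IsCompact (closure U - closure U) := by
    simpa only [sub_eq_add_neg] using hΦ.relCompact.add hΦ.relCompact.neg
  obtain ⟨t, -, ht⟩ := hK.elim_nhds_subcover (fun p => p +ᵥ U)
    fun p _ => by simpa using vadd_mem_nhds_vadd p hΦ.mem_nhds
  exact ⟨t, (Set.sub_subset_sub subset_closure subset_closure).trans ht⟩

lemma maxCenters_sub_lt_top [IsTopologicalAddGroup G] (hΦ : IsBUPU φ x U M B) :
    maxCenters x (U - U) < ⊤ := by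
  obtain ⟨t, ht⟩ := hΦ.exists_finset_sub_subset_biUnion
  calc maxCenters x (U - U) ≤ ((t.card * B : ℕ∞) : ℝ≥0∞) :=
        iSup_le fun g => ENat.toENNReal_le.mpr (hΦ.encard_centers_le_of_subset_biUnion ht g)
    _ < ⊤ := by simp [ENNReal.mul_lt_top]

end IsBUPU

theorem stmt12_general {G I : Type*} [AddCommGroup G] [TopologicalSpace G] [IsTopologicalAddGroup G]
    {φ : I → G → ℝ} {x : I → G} {U : Set G} {M : NNReal} {B : ℕ}
    (hΦ : IsBUPU φ x U M B)
    (f : G → ℂ)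
    (hfW : WNorm φ f < ⊤) :
    WNorm φ f ≤ (⨆ a : G, WNorm φ (fun t => f (t - a))) ∧
    (⨆ a : G, WNorm φ (fun t => f (t - a))) ≤
      (⨆ g : G, (({i : I | x i ∈ g +ᵥ (U - U)} : Set I).encard : ℝ≥0∞)) * (M : ℝ≥0∞) *
        WNorm φ f ∧
    (⨆ a : G, WNorm φ (fun t => f (t - a))) < ⊤ ∧
    (∀ b : G, (⨆ a : G, WNorm φ (fun t => f (t - b - a))) =
      ⨆ a : G, WNorm φ (fun t => f (t - a))) := by
  have htranslate : ⨆ a, WNorm φ (fun t => f (t - a)) ≤ maxCenters x (U - U) * M * WNorm φ f :=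
    iSup_le (hΦ.wnorm_translate_le f)
  refine ⟨?_, htranslate, htranslate.trans_lt ?_, fun b => ?_⟩
  · simpa using le_iSup (fun a => WNorm φ fun t => f (t - a)) 0
  · exact ENNReal.mul_lt_top (ENNReal.mul_lt_top hΦ.maxCenters_sub_lt_top ENNReal.coe_lt_top) hfW
  · simpa only [sub_sub, Equiv.coe_addLeft] using
      (Equiv.addLeft b).iSup_comp (g := fun a => WNorm φ fun t => f (t - a))

/-- For the Wiener norm `‖·‖_Φ` of a BUPU `Φ` of size `U`, norm `M` and point
family `X`, the norm `‖f‖_W = sup_{a∈G} ‖T_a f‖_Φ` is finite for every `f ∈ W(G)`, satisfies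
`‖f‖_Φ ≤ ‖f‖_W ≤ ‖δ_X‖_{U−U} · M · ‖f‖_Φ`, and is translation invariant. -/
theorem stmt12 {G I : Type*} [AddCommGroup G] [TopologicalSpace G] [IsTopologicalAddGroup G]
    [LocallyCompactSpace G] [T2Space G]
    {φ : I → G → ℝ} {x : I → G} {U : Set G} {M : NNReal} {B : ℕ}
    (hΦ : IsBUPU φ x U M B)
    (f : G → ℂ) (hfc : Continuous f) (hf0 : Tendsto f (cocompact G) (nhds 0))
    (hfW : WNorm φ f < ⊤) :
    WNorm φ f ≤ (⨆ a : G, WNorm φ (fun t => f (t - a))) ∧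
    (⨆ a : G, WNorm φ (fun t => f (t - a))) ≤
      (⨆ g : G, (({i : I | x i ∈ g +ᵥ (U - U)} : Set I).encard : ℝ≥0∞)) * (M : ℝ≥0∞) *
        WNorm φ f ∧
    (⨆ a : G, WNorm φ (fun t => f (t - a))) < ⊤ ∧
    (∀ b : G, (⨆ a : G, WNorm φ (fun t => f (t - b - a))) =
      ⨆ a : G, WNorm φ (fun t => f (t - a))) :=
  stmt12_general hΦ f hfW
end

section
/- Let G, H be LCA groups and L a lattice (discrete cocompact subgroup) in G × H. Then the weighted model set comb ω_h = ∑_{(x,y)∈L} h(y) δ_x is a translation bounded measure on G for every h in the Wiener algebra W(H), with operator norm bound |ω_h(g)| ≤ C · ‖g‖_{W(G)} · ‖h‖_{W(H)} for all g ∈ W(G), where C depends only on L. -/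
open Pointwise MeasureTheory Filter Topology ENNReal

/-!
Split `|g|` and `|h|` along the two BUPUs. The piece `|g φᵢ|(l.1) · |h ψⱼ|(l.2)` is bounded by
`‖g φᵢ‖_∞ ‖h ψⱼ‖_∞` and vanishes unless `l` lies in the translate `(xᵢ, yⱼ) + (Ū × V̄)` of one
fixed compact set. A discrete subgroup meets every translate `a + K` of a compact set in at most
`#(L ∩ (K - K))` points, since any two such points differ by an element of that finite set; so
summing the pieces over `L` costs at most this uniform count. Translation boundedness is the same
argument with the single set `a + K` in place of the BUPU on `G`.
-/

theorem Set.indicator_prod_const {α β M₀ : Type*} [MulZeroClass M₀] (s : Set α) (t : Set β)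
    (a b : M₀) (z : α × β) :
    (s ×ˢ t).indicator (fun _ => a * b) z
      = s.indicator (fun _ => a) z.1 * t.indicator (fun _ => b) z.2 := by
  by_cases h₁ : z.1 ∈ s <;> by_cases h₂ : z.2 ∈ t <;> simp [h₁, h₂]

theorem Set.mk_vadd_prod {α β : Type*} [Add α] [Add β] (a : α) (b : β) (s : Set α)
    (t : Set β) : (a, b) +ᵥ s ×ˢ t = (a +ᵥ s) ×ˢ (b +ᵥ t) := by
  ext ⟨u, v⟩
  simp only [Set.mem_vadd_set, Set.mem_prod, vadd_eq_add, Prod.exists, Prod.mk_add_mk,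
    Prod.mk.injEq]
  aesop

theorem ENNReal.tsum_mul_tsum {ι κ : Type*} (a : ι → ℝ≥0∞) (b : κ → ℝ≥0∞) :
    (∑' i, a i) * ∑' j, b j = ∑' p : ι × κ, a p.1 * b p.2 := by
  rw [ENNReal.tsum_prod', ← ENNReal.tsum_mul_right]
  exact tsum_congr fun i => ENNReal.tsum_mul_left.symm

theorem tsum_subtype_indicator_const {E : Type*} (L S : Set E) (c : ℝ≥0∞) :
    ∑' l : L, S.indicator (fun _ => c) (l : E) = (S ∩ L).encard * c := by
  rw [tsum_subtype L, Set.indicator_indicator, ← tsum_subtype, ENNReal.tsum_set_const,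
    Set.inter_comm]

theorem tsum_le_mul_tsum_of_le_tsum_indicator {E ι : Type*} [Add E] (L : Set E) {K : Set E}
    {n : ℕ} (hn : ∀ a : E, ((a +ᵥ K) ∩ L).encard ≤ n) {f : E → ℝ≥0∞} {c : ι → E}
    {s : ι → ℝ≥0∞} (hf : ∀ z, f z ≤ ∑' i, (c i +ᵥ K).indicator (fun _ => s i) z) :
    ∑' l : L, f l ≤ n * ∑' i, s i :=
  calc ∑' l : L, f l
      ≤ ∑' (l : L) (i : ι), (c i +ᵥ K).indicator (fun _ => s i) (l : E) :=
        ENNReal.tsum_le_tsum fun l => hf l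
    _ = ∑' i, ((c i +ᵥ K) ∩ L).encard * s i := by
        rw [ENNReal.tsum_comm]
        simp only [tsum_subtype_indicator_const]
    _ ≤ ∑' i, (n : ℝ≥0∞) * s i := by
        gcongr with i
        exact_mod_cast hn (c i)
    _ = n * ∑' i, s i := ENNReal.tsum_mul_left

section DiscreteSubgroup

variable {E : Type*} [AddCommGroup E] [TopologicalSpace E] [IsTopologicalAddGroup E] [T2Space E]
  (L : AddSubgroup E) [DiscreteTopology L]

theorem AddSubgroup.finite_inter_of_isCompact {C : Set E} (hC : IsCompact C) :
    (C ∩ L).Finite :=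
  (hC.inter_right L.isClosed_of_discrete).finite <|
    (isDiscrete_iff_discreteTopology.mpr ‹_›).mono Set.inter_subset_right

theorem AddSubgroup.exists_encard_vadd_inter_le {K : Set E} (hK : IsCompact K) :
    ∃ n : ℕ, ∀ a : E, ((a +ᵥ K) ∩ L).encard ≤ n := by
  have hKK : IsCompact (K - K) := by
    simpa only [Set.image_prod, Set.image2_sub] using (hK.prod hK).image continuous_sub
  obtain ⟨n, hn⟩ := (L.finite_inter_of_isCompact hKK).exists_encard_eq_coe
  refine ⟨n, fun a => ?_⟩
  rcases ((a +ᵥ K) ∩ L).eq_empty_or_nonempty with hempty | ⟨z₀, hz₀K, hz₀L⟩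
  · simp [hempty]
  rw [← hn, ← (sub_left_injective (b := z₀)).injOn.encard_image]
  refine Set.encard_le_encard ?_
  rintro _ ⟨z, ⟨hzK, hzL⟩, rfl⟩
  obtain ⟨k, hk, rfl⟩ := hzK
  obtain ⟨k₀, hk₀, rfl⟩ := hz₀K
  refine ⟨⟨k, hk, k₀, hk₀, ?_⟩, L.sub_mem hzL hz₀L⟩
  simp only [vadd_eq_add]
  abel

end DiscreteSubgroup

namespace IsBUPU

variable {G I : Type*} [AddCommGroup G] [TopologicalSpace G] {φ : I → G → ℝ} {x : I → G}
  {U : Set G} {M : NNReal} {B : ℕ}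

theorem nnnorm_le_tsum (hΦ : IsBUPU φ x U M B) (f : G → ℂ) (z : G) :
    (‖f z‖₊ : ℝ≥0∞) ≤ ∑' i, (‖f z * (φ i z : ℂ)‖₊ : ℝ≥0∞) := by
  have hsum : HasSum (fun i => f z * (φ i z : ℂ)) (f z) := by
    simpa using (Complex.hasSum_ofReal.mpr (hΦ.hasSum_one z)).mul_left (f z)
  simpa only [hsum.tsum_eq, enorm_eq_nnnorm] using
    enorm_tsum_le_tsum_enorm (f := fun i => f z * (φ i z : ℂ))

theorem nnnorm_mul_le_indicator (hΦ : IsBUPU φ x U M B) (f : G → ℂ) (i : I) (z : G) :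
    (‖f z * (φ i z : ℂ)‖₊ : ℝ≥0∞)
      ≤ (x i +ᵥ closure U).indicator (fun _ => ⨆ w, (‖f w * (φ i w : ℂ)‖₊ : ℝ≥0∞)) z := by
  by_cases hz : z ∈ x i +ᵥ closure U
  · rw [Set.indicator_of_mem hz]
    exact le_iSup (fun w => (‖f w * (φ i w : ℂ)‖₊ : ℝ≥0∞)) z
  · have hφ : φ i z = 0 := image_eq_zero_of_notMem_tsupport fun hmem =>
      hz (Set.vadd_set_mono subset_closure (hΦ.support_subset i hmem))
    simp [hφ]

theorem nnnorm_le_tsum_indicator (hΦ : IsBUPU φ x U M B) (f : G → ℂ) (z : G) :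
    (‖f z‖₊ : ℝ≥0∞)
      ≤ ∑' i, (x i +ᵥ closure U).indicator (fun _ => ⨆ w, (‖f w * (φ i w : ℂ)‖₊ : ℝ≥0∞)) z :=
  (hΦ.nnnorm_le_tsum f z).trans (ENNReal.tsum_le_tsum fun i => hΦ.nnnorm_mul_le_indicator f i z)

end IsBUPU

theorem stmt18_general {G H I J : Type*}
    [AddCommGroup G] [TopologicalSpace G] [IsTopologicalAddGroup G] [T2Space G]
    [AddCommGroup H] [TopologicalSpace H] [IsTopologicalAddGroup H] [T2Space H]
    (L : AddSubgroup (G × H)) (hLdisc : DiscreteTopology L)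
    {φ : I → G → ℝ} {x : I → G} {U : Set G} {M : NNReal} {BΦ : ℕ}
    {ψ : J → H → ℝ} {y : J → H} {V : Set H} {N : NNReal} {BΨ : ℕ}
    (hΦ : IsBUPU φ x U M BΦ) (hΨ : IsBUPU ψ y V N BΨ) :
    ∃ C : ℝ≥0∞, C < ⊤ ∧
      ∀ (h : H → ℂ), Continuous h → Tendsto h (cocompact H) (nhds 0) → WNorm ψ h < ⊤ →
        (∀ (g : G → ℂ), Continuous g → Tendsto g (cocompact G) (nhds 0) →
          ∑' l : L, (‖h ((l : G × H)).2 * g ((l : G × H)).1‖₊ : ℝ≥0∞)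
            ≤ C * WNorm φ g * WNorm ψ h) ∧
        (∀ K : Set G, IsCompact K →
          (⨆ a : G, ∑' l : L,
            (a +ᵥ K).indicator (fun _ : G => (‖h ((l : G × H)).2‖₊ : ℝ≥0∞))
              ((l : G × H)).1) < ⊤) := by
  obtain ⟨n, hn⟩ := L.exists_encard_vadd_inter_le (hΦ.relCompact.prod hΨ.relCompact)
  refine ⟨n, natCast_lt_top n, fun h _ _ hWψ => ⟨fun g _ _ => ?_, fun K hK => ?_⟩⟩
  · rw [mul_assoc, WNorm, WNorm, ENNReal.tsum_mul_tsum]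
    refine tsum_le_mul_tsum_of_le_tsum_indicator (L : Set (G × H)) hn
      (f := fun z => ‖h z.2 * g z.1‖₊) (c := fun p => (x p.1, y p.2)) fun z => ?_
    calc (‖h z.2 * g z.1‖₊ : ℝ≥0∞) = ‖g z.1‖₊ * ‖h z.2‖₊ := by
          rw [mul_comm, nnnorm_mul, ENNReal.coe_mul]
      _ ≤ _ := mul_le_mul' (hΦ.nnnorm_le_tsum_indicator g z.1) (hΨ.nnnorm_le_tsum_indicator h z.2)
      _ = _ := by simp only [ENNReal.tsum_mul_tsum, Set.mk_vadd_prod, Set.indicator_prod_const]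
  · obtain ⟨m, hm⟩ := L.exists_encard_vadd_inter_le (hK.prod hΨ.relCompact)
    refine lt_of_le_of_lt (iSup_le fun a => ?_) (mul_lt_top (natCast_lt_top m) hWψ)
    rw [WNorm]
    refine tsum_le_mul_tsum_of_le_tsum_indicator (L : Set (G × H)) hm
      (f := fun z => (a +ᵥ K).indicator (fun _ => (‖h z.2‖₊ : ℝ≥0∞)) z.1)
      (c := fun j => (a, y j)) fun z => ?_
    by_cases hz : z.1 ∈ a +ᵥ K
    · classical
      simpa [Set.mk_vadd_prod, Set.indicator_apply, hz]
        using hΨ.nnnorm_le_tsum_indicator h z.2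
    · simp [hz]

/-- Let `G, H` be LCA groups and `L` a lattice (discrete cocompact subgroup)
in `G × H`.  Then the weighted model set comb `ω_h = ∑_{(x,y)∈L} h(y) δ_x` is a translation
bounded measure on `G` for every `h ∈ W(H)`, with the operator norm bound
`|ω_h(g)| ≤ C · ‖g‖_{W(G)} · ‖h‖_{W(H)}` for all `g ∈ W(G)`, where `C` depends only on
`L` (and the chosen BUPUs). -/
theorem stmt18 {G H I J : Type*}
    [AddCommGroup G] [TopologicalSpace G] [IsTopologicalAddGroup G] [LocallyCompactSpace G] [T2Space G]
    [AddCommGroup H] [TopologicalSpace H] [IsTopologicalAddGroup H] [LocallyCompactSpace H] [T2Space H]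
    (L : AddSubgroup (G × H)) (hLdisc : DiscreteTopology L)
    (hLcocpt : ∃ K : Set (G × H), IsCompact K ∧ K + (L : Set (G × H)) = Set.univ)
    {φ : I → G → ℝ} {x : I → G} {U : Set G} {M : NNReal} {BΦ : ℕ}
    {ψ : J → H → ℝ} {y : J → H} {V : Set H} {N : NNReal} {BΨ : ℕ}
    (hΦ : IsBUPU φ x U M BΦ) (hΨ : IsBUPU ψ y V N BΨ) :
    ∃ C : ℝ≥0∞, C < ⊤ ∧
      ∀ (h : H → ℂ), Continuous h → Tendsto h (cocompact H) (nhds 0) → WNorm ψ h < ⊤ →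
        (∀ (g : G → ℂ), Continuous g → Tendsto g (cocompact G) (nhds 0) →
          ∑' l : L, (‖h ((l : G × H)).2 * g ((l : G × H)).1‖₊ : ℝ≥0∞)
            ≤ C * WNorm φ g * WNorm ψ h) ∧
        (∀ K : Set G, IsCompact K →
          (⨆ a : G, ∑' l : L,
            (a +ᵥ K).indicator (fun _ : G => (‖h ((l : G × H)).2‖₊ : ℝ≥0∞))
              ((l : G × H)).1) < ⊤) :=
  stmt18_general L hLdisc hΦ hΨ
end

section
/- Let G, H be LCA groups and L a discrete cocompact subgroup of G × H. For all g ∈ W₀(G) and h ∈ W₀(H), the Poisson summation formula ω_h(g) = dens(L) · ω_{hˇ}(gˇ) holds with absolutely convergent sums, where ω_h = ∑_{(x,y)∈L} h(y) δ_x on G and ω_{hˇ} = ∑_{(χ,η)∈L°} hˇ(η) δ_χ on Ĝ. Consequently ω_h is twice AG transformable with ω̂_h = dens(L) · ω_{hˇ}. -/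
open Pointwise MeasureTheory Filter Topology ENNReal

/-- An abstract Pontryagin duality pairing between an LCA group `G` and its dual group
`Ĝ`: a jointly continuous bi-additive pairing by unimodular complex numbers separating
points on both sides. -/
structure FourierPair' (G Gd : Type*) [AddCommGroup G] [TopologicalSpace G]
    [AddCommGroup Gd] [TopologicalSpace Gd] where
  e : G → Gd → ℂ
  continuous_e : Continuous fun p : G × Gd => e p.1 p.2
  norm_one : ∀ x χ, ‖e x χ‖ = 1
  add_left : ∀ x y χ, e (x + y) χ = e x χ * e y χ
  add_right : ∀ x χ η, e x (χ + η) = e x χ * e x η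
  sep_left : ∀ x : G, x ≠ 0 → ∃ χ, e x χ ≠ 1
  sep_right : ∀ χ : Gd, χ ≠ 0 → ∃ x, e x χ ≠ 1

/-- The Fourier transform `f̂(χ) = ∫ conj(e(x,χ)) f(x) dμ(x)` associated to a pairing. -/
noncomputable def FourierPair'.FT {G Gd : Type*} [AddCommGroup G] [TopologicalSpace G]
    [AddCommGroup Gd] [TopologicalSpace Gd] [MeasurableSpace G]
    (P : FourierPair' G Gd) (μ : MeasureTheory.Measure G) (f : G → ℂ) : Gd → ℂ :=
  fun χ => ∫ x, (starRingEnd ℂ) (P.e x χ) * f x ∂μ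

/-- The inverse Fourier transform `f̌(χ) = ∫ e(x,χ) f(x) dμ(x)` associated to a pairing. -/
noncomputable def FourierPair'.invFT {G Gd : Type*} [AddCommGroup G] [TopologicalSpace G]
    [AddCommGroup Gd] [TopologicalSpace Gd] [MeasurableSpace G]
    (P : FourierPair' G Gd) (μ : MeasureTheory.Measure G) (f : G → ℂ) : Gd → ℂ :=
  fun χ => ∫ x, P.e x χ * f x ∂μ

/-! Apply the Poisson summation formula on `G × H` to `F = g ⊗ h`. It lies in `W₀(G × H)`
because the Wiener norm of a tensor is the product of the Wiener norms, a tensor of `C₀`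
functions is `C₀`, and by Fubini `F̌ = ǧ ⊗ ȟ`. -/

theorem wNorm_prod_mul {X Y I J : Type*} (φ : I → X → ℝ) (ψ : J → Y → ℝ)
    (f : X → ℂ) (g : Y → ℂ) :
    WNorm (fun p : I × J => fun q : X × Y => φ p.1 q.1 * ψ p.2 q.2)
      (fun q : X × Y => f q.1 * g q.2) = WNorm φ f * WNorm ψ g := by
  have sup_prod : ∀ (i : I) (j : J),
      (⨆ q : X × Y, (‖f q.1 * g q.2 * ((φ i q.1 * ψ j q.2 : ℝ) : ℂ)‖₊ : ℝ≥0∞)) =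
      (⨆ x : X, (‖f x * (φ i x : ℂ)‖₊ : ℝ≥0∞)) * ⨆ y : Y, (‖g y * (ψ j y : ℂ)‖₊ : ℝ≥0∞) := by
    intro i j
    have pointwise : ∀ q : X × Y, (‖f q.1 * g q.2 * ((φ i q.1 * ψ j q.2 : ℝ) : ℂ)‖₊ : ℝ≥0∞) =
        (‖f q.1 * (φ i q.1 : ℂ)‖₊ : ℝ≥0∞) * ‖g q.2 * (ψ j q.2 : ℂ)‖₊ := by
      intro q
      rw [← ENNReal.coe_mul, ← nnnorm_mul]
      push_cast
      ring_nf
    simp_rw [pointwise, iSup_prod, ← ENNReal.mul_iSup, ← ENNReal.iSup_mul]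
  simp_rw [WNorm, sup_prod, ENNReal.tsum_prod', ENNReal.tsum_mul_left, ENNReal.tsum_mul_right]

theorem FourierPair'.integral_prod_e_mul {G H Gd Hd : Type*}
    [AddCommGroup G] [TopologicalSpace G] [MeasurableSpace G]
    [AddCommGroup H] [TopologicalSpace H] [MeasurableSpace H]
    [AddCommGroup Gd] [TopologicalSpace Gd] [AddCommGroup Hd] [TopologicalSpace Hd]
    (PG : FourierPair' G Gd) (PH : FourierPair' H Hd)
    (μG : Measure G) [SFinite μG] (μH : Measure H) [SFinite μH]
    (g : G → ℂ) (h : H → ℂ) (p : Gd × Hd) :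
    ∫ z, PG.e z.1 p.1 * PH.e z.2 p.2 * (g z.1 * h z.2) ∂(μG.prod μH) =
      PG.invFT μG g p.1 * PH.invFT μH h p.2 := by
  simp_rw [show ∀ z : G × H, PG.e z.1 p.1 * PH.e z.2 p.2 * (g z.1 * h z.2) =
      PG.e z.1 p.1 * g z.1 * (PH.e z.2 p.2 * h z.2) from fun _ => by ring]
  exact integral_prod_mul (fun x => PG.e x p.1 * g x) (fun y => PH.e y p.2 * h y)

theorem stmt19_general {G H Gd Hd I I' J J' : Type*}
    [AddCommGroup G] [TopologicalSpace G] [MeasurableSpace G]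
    [AddCommGroup H] [TopologicalSpace H] [MeasurableSpace H]
    [AddCommGroup Gd] [TopologicalSpace Gd] [AddCommGroup Hd] [TopologicalSpace Hd]
    (PG : FourierPair' G Gd) (PH : FourierPair' H Hd)
    (μG : Measure G) [SigmaFinite μG] (μH : Measure H) [SigmaFinite μH]
    -- BUPUs describing the Wiener algebras of `G`, `H`, `Ĝ`, `Ĥ`
    {φG : I → G → ℝ} {φH : J → H → ℝ} {φGd : I' → Gd → ℝ} {φHd : J' → Hd → ℝ}
    -- the lattice, its dual lattice, and its density
    (L : AddSubgroup (G × H)) (L0 : Set (Gd × Hd)) (d : ℝ)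
    -- the Poisson summation formula for `L`, valid on `W₀(G × H)`
    (hPSF : ∀ F : G × H → ℂ, Continuous F → Tendsto F (cocompact (G × H)) (nhds 0) →
      WNorm (fun p : I × J => fun q : G × H => φG p.1 q.1 * φH p.2 q.2) F < ⊤ →
      Continuous (fun p : Gd × Hd => ∫ z, PG.e z.1 p.1 * PH.e z.2 p.2 * F z ∂(μG.prod μH)) →
      Tendsto (fun p : Gd × Hd => ∫ z, PG.e z.1 p.1 * PH.e z.2 p.2 * F z ∂(μG.prod μH))
        (cocompact (Gd × Hd)) (nhds 0) →
      WNorm (fun p : I' × J' => fun q : Gd × Hd => φGd p.1 q.1 * φHd p.2 q.2)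
        (fun p : Gd × Hd => ∫ z, PG.e z.1 p.1 * PH.e z.2 p.2 * F z ∂(μG.prod μH)) < ⊤ →
      (Summable fun l : L => ‖F (l : G × H)‖) ∧
      (Summable fun k : L0 =>
        ‖∫ z, PG.e z.1 (k : Gd × Hd).1 * PH.e z.2 (k : Gd × Hd).2 * F z ∂(μG.prod μH)‖) ∧
      (∑' l : L, F (l : G × H)) = (d : ℂ) *
        ∑' k : L0, ∫ z, PG.e z.1 (k : Gd × Hd).1 * PH.e z.2 (k : Gd × Hd).2 * F z
          ∂(μG.prod μH)) :
    -- conclusion: the PSF for weighted model sets, with absolutely convergent sums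
    ∀ g : G → ℂ, Continuous g → Tendsto g (cocompact G) (nhds 0) → WNorm φG g < ⊤ →
      Continuous (PG.invFT μG g) → Tendsto (PG.invFT μG g) (cocompact Gd) (nhds 0) →
      WNorm φGd (PG.invFT μG g) < ⊤ →
    ∀ h : H → ℂ, Continuous h → Tendsto h (cocompact H) (nhds 0) → WNorm φH h < ⊤ →
      Continuous (PH.invFT μH h) → Tendsto (PH.invFT μH h) (cocompact Hd) (nhds 0) →
      WNorm φHd (PH.invFT μH h) < ⊤ →
      (Summable fun l : L => ‖h ((l : G × H)).2 * g ((l : G × H)).1‖) ∧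
      (Summable fun k : L0 =>
        ‖PH.invFT μH h ((k : Gd × Hd)).2 * PG.invFT μG g ((k : Gd × Hd)).1‖) ∧
      (∑' l : L, h ((l : G × H)).2 * g ((l : G × H)).1) =
        (d : ℂ) * ∑' k : L0, PH.invFT μH h ((k : Gd × Hd)).2 *
          PG.invFT μG g ((k : Gd × Hd)).1 := by
  intro g hgc hg0 hgW hgc' hg0' hgW' h hhc hh0 hhW hhc' hh0' hhW'
  have hFT : (fun p : Gd × Hd => ∫ z, PG.e z.1 p.1 * PH.e z.2 p.2 * (g z.1 * h z.2)
      ∂(μG.prod μH)) = fun p => PG.invFT μG g p.1 * PH.invFT μH h p.2 :=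
    funext (PG.integral_prod_e_mul PH μG μH g h)
  obtain ⟨hsum, hsum', hpsf⟩ := hPSF (fun q => g q.1 * h q.2)
    ((hgc.comp continuous_fst).mul (hhc.comp continuous_snd))
    (tendsto_mul_cocompact_nhds_zero hgc hhc hg0 hh0)
    (by rw [wNorm_prod_mul]; exact ENNReal.mul_lt_top hgW hhW)
    (by rw [hFT]; exact (hgc'.comp continuous_fst).mul (hhc'.comp continuous_snd))
    (by rw [hFT]; exact tendsto_mul_cocompact_nhds_zero hgc' hhc' hg0' hh0')
    (by rw [hFT, wNorm_prod_mul]; exact ENNReal.mul_lt_top hgW' hhW')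
  simp only [PG.integral_prod_e_mul PH μG μH g h] at hsum' hpsf
  simp only [mul_comm (h _), mul_comm (PH.invFT μH h _)]
  exact ⟨hsum, hsum', hpsf⟩

/-- Poisson summation formula for weighted model sets: Let `G, H` be LCA
groups and `L` a discrete cocompact subgroup of `G × H` with dual lattice `L°` and density
`dens(L) = d`, for which the Poisson summation formula
`δ_L(F) = d · δ_{L°}(F̌)` holds on `W₀(G × H)` (hypothesis `hPSF`).  Then for all
`g ∈ W₀(G)` and `h ∈ W₀(H)` the formula `ω_h(g) = d · ω_{ȟ}(ǧ)` holds with absolutely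
convergent sums, where `ω_h = ∑_{(x,y)∈L} h(y) δ_x` and `ω_{ȟ} = ∑_{(χ,η)∈L°} ȟ(η) δ_χ`;
consequently `ω_h` is twice AG transformable with `ω̂_h = d · ω_{ȟ}`. -/
theorem stmt19 {G H Gd Hd I I' J J' : Type*}
    [AddCommGroup G] [TopologicalSpace G] [IsTopologicalAddGroup G] [LocallyCompactSpace G]
    [T2Space G] [MeasurableSpace G] [BorelSpace G]
    [AddCommGroup H] [TopologicalSpace H] [IsTopologicalAddGroup H] [LocallyCompactSpace H]
    [T2Space H] [MeasurableSpace H] [BorelSpace H]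
    [AddCommGroup Gd] [TopologicalSpace Gd] [IsTopologicalAddGroup Gd] [LocallyCompactSpace Gd]
    [T2Space Gd]
    [AddCommGroup Hd] [TopologicalSpace Hd] [IsTopologicalAddGroup Hd] [LocallyCompactSpace Hd]
    [T2Space Hd]
    (PG : FourierPair' G Gd) (PH : FourierPair' H Hd)
    (μG : Measure G) [μG.IsAddHaarMeasure] [SigmaFinite μG]
    (μH : Measure H) [μH.IsAddHaarMeasure] [SigmaFinite μH]
    -- BUPUs describing the Wiener algebras of `G`, `H`, `Ĝ`, `Ĥ`
    {φG : I → G → ℝ} {xG : I → G} {UG : Set G} {MG : NNReal} {BG : ℕ}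
    (hΦG : IsBUPU φG xG UG MG BG)
    {φH : J → H → ℝ} {xH : J → H} {UH : Set H} {MH : NNReal} {BH : ℕ}
    (hΦH : IsBUPU φH xH UH MH BH)
    {φGd : I' → Gd → ℝ} {xGd : I' → Gd} {UGd : Set Gd} {MGd : NNReal} {BGd : ℕ}
    (hΦGd : IsBUPU φGd xGd UGd MGd BGd)
    {φHd : J' → Hd → ℝ} {xHd : J' → Hd} {UHd : Set Hd} {MHd : NNReal} {BHd : ℕ}
    (hΦHd : IsBUPU φHd xHd UHd MHd BHd)
    -- the lattice, its dual lattice, and its density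
    (L : AddSubgroup (G × H)) (hLdisc : DiscreteTopology L)
    (hLcocpt : ∃ K : Set (G × H), IsCompact K ∧ K + (L : Set (G × H)) = Set.univ)
    (L0 : Set (Gd × Hd))
    (hL0 : L0 = {p : Gd × Hd | ∀ l ∈ L, PG.e l.1 p.1 * PH.e l.2 p.2 = 1})
    (d : ℝ) (hd : 0 < d)
    -- the Poisson summation formula for `L`, valid on `W₀(G × H)`
    (hPSF : ∀ F : G × H → ℂ, Continuous F → Tendsto F (cocompact (G × H)) (nhds 0) →
      WNorm (fun p : I × J => fun q : G × H => φG p.1 q.1 * φH p.2 q.2) F < ⊤ →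
      Continuous (fun p : Gd × Hd => ∫ z, PG.e z.1 p.1 * PH.e z.2 p.2 * F z ∂(μG.prod μH)) →
      Tendsto (fun p : Gd × Hd => ∫ z, PG.e z.1 p.1 * PH.e z.2 p.2 * F z ∂(μG.prod μH))
        (cocompact (Gd × Hd)) (nhds 0) →
      WNorm (fun p : I' × J' => fun q : Gd × Hd => φGd p.1 q.1 * φHd p.2 q.2)
        (fun p : Gd × Hd => ∫ z, PG.e z.1 p.1 * PH.e z.2 p.2 * F z ∂(μG.prod μH)) < ⊤ →
      (Summable fun l : L => ‖F (l : G × H)‖) ∧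
      (Summable fun k : L0 =>
        ‖∫ z, PG.e z.1 (k : Gd × Hd).1 * PH.e z.2 (k : Gd × Hd).2 * F z ∂(μG.prod μH)‖) ∧
      (∑' l : L, F (l : G × H)) = (d : ℂ) *
        ∑' k : L0, ∫ z, PG.e z.1 (k : Gd × Hd).1 * PH.e z.2 (k : Gd × Hd).2 * F z
          ∂(μG.prod μH)) :
    -- conclusion: the PSF for weighted model sets, with absolutely convergent sums
    ∀ g : G → ℂ, Continuous g → Tendsto g (cocompact G) (nhds 0) → WNorm φG g < ⊤ →
      Continuous (PG.invFT μG g) → Tendsto (PG.invFT μG g) (cocompact Gd) (nhds 0) →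
      WNorm φGd (PG.invFT μG g) < ⊤ →
    ∀ h : H → ℂ, Continuous h → Tendsto h (cocompact H) (nhds 0) → WNorm φH h < ⊤ →
      Continuous (PH.invFT μH h) → Tendsto (PH.invFT μH h) (cocompact Hd) (nhds 0) →
      WNorm φHd (PH.invFT μH h) < ⊤ →
      (Summable fun l : L => ‖h ((l : G × H)).2 * g ((l : G × H)).1‖) ∧
      (Summable fun k : L0 =>
        ‖PH.invFT μH h ((k : Gd × Hd)).2 * PG.invFT μG g ((k : Gd × Hd)).1‖) ∧
      (∑' l : L, h ((l : G × H)).2 * g ((l : G × H)).1) =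
        (d : ℂ) * ∑' k : L0, PH.invFT μH h ((k : Gd × Hd)).2 *
          PG.invFT μG g ((k : Gd × Hd)).1 :=
  stmt19_general PG PH μG μH L L0 d hPSF
end
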